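/- arXiv:1008.2266 — 2 statements merged into one kernel-verified Lean document; each statement's English description precedes it below -/
import Mathlib

section
/- Let h11, h21, hr1, h22, h2r > 0 be fixed real numbers. Define, for P > 0, R̄_{S1}(P) := C(P·(h11² + h21² + hr1² + 2·hr1·√(h11² + h21²))) + C(h22²·P/(1 + max(h21², h2r²)·P)) + C(h2r²/h21²). Then as P → ∞, the difference R̄_{S1}(P) − (1/2)·log₂(P) converges to the finite limit (1/2)·log₂(h11² + h21² + hr1² + 2·hr1·√(h11² + h21²)) + C(h22²/max(h21², h2r²)) + C(h2r²/h21²). In particular, R̄_{S1}(P) = (1/2)·log₂(P) + O(1) as P → ∞. -/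
open Filter

/-- `C(x) = (1/2) * log₂(1 + x)`. -/
noncomputable def Cfun (x : ℝ) : ℝ := (1 / 2) * Real.logb 2 (1 + x)

/-- The closed-form genie-aided sum-rate upper bound `R̄_{S1}` as a function of the power `P`. -/
noncomputable def RbarS1 (h11 h21 hr1 h22 h2r P : ℝ) : ℝ :=
  Cfun (P * (h11 ^ 2 + h21 ^ 2 + hr1 ^ 2 + 2 * hr1 * Real.sqrt (h11 ^ 2 + h21 ^ 2)))
    + Cfun (h22 ^ 2 * P / (1 + max (h21 ^ 2) (h2r ^ 2) * P))
    + Cfun (h2r ^ 2 / h21 ^ 2)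

/-- As `P → ∞`, `R̄_{S1}(P) − (1/2)·log₂ P` converges to the stated finite limit; in particular
`R̄_{S1}(P) = (1/2)·log₂ P + O(1)`. -/
theorem stmt1 (h11 h21 hr1 h22 h2r : ℝ)
    (h11pos : 0 < h11) (h21pos : 0 < h21) (hr1pos : 0 < hr1)
    (h22pos : 0 < h22) (h2rpos : 0 < h2r) :
    Tendsto (fun P : ℝ => RbarS1 h11 h21 hr1 h22 h2r P - (1 / 2) * Real.logb 2 P) atTop
      (nhds ((1 / 2) * Real.logb 2
          (h11 ^ 2 + h21 ^ 2 + hr1 ^ 2 + 2 * hr1 * Real.sqrt (h11 ^ 2 + h21 ^ 2))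
        + Cfun (h22 ^ 2 / max (h21 ^ 2) (h2r ^ 2))
        + Cfun (h2r ^ 2 / h21 ^ 2)))
    ∧ (fun P : ℝ => RbarS1 h11 h21 hr1 h22 h2r P - (1 / 2) * Real.logb 2 P)
        =O[atTop] (fun _ : ℝ => (1 : ℝ)) := by
  set A : ℝ := h11 ^ 2 + h21 ^ 2 + hr1 ^ 2 + 2 * hr1 * Real.sqrt (h11 ^ 2 + h21 ^ 2) with hAdef
  have hApos : 0 < A := by
    have : 0 ≤ Real.sqrt (h11 ^ 2 + h21 ^ 2) := Real.sqrt_nonneg _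
    positivity
  set m : ℝ := max (h21 ^ 2) (h2r ^ 2) with hmdef
  have hmpos : 0 < m := lt_max_of_lt_left (by positivity)
  -- Term 1
  have T1 : Tendsto (fun P : ℝ => Cfun (P * A) - (1 / 2) * Real.logb 2 P) atTop
      (nhds ((1 / 2) * Real.logb 2 A)) := by
    have harg : Tendsto (fun P : ℝ => 1 / P + A) atTop (nhds A) := by
      have := tendsto_inv_atTop_zero (𝕜 := ℝ)
      simpa [one_div] using this.add_const A
    have hlog : Tendsto (fun P : ℝ => (1 / 2) * Real.logb 2 (1 / P + A)) atTop
        (nhds ((1 / 2) * Real.logb 2 A)) :=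
      (((Real.continuousAt_logb (ne_of_gt hApos)).tendsto.comp harg).const_mul _)
    refine hlog.congr' ?_
    filter_upwards [eventually_gt_atTop (0 : ℝ)] with P hP
    have h1 : (0 : ℝ) < 1 + P * A := by positivity
    have : Real.logb 2 (1 / P + A) = Real.logb 2 (1 + P * A) - Real.logb 2 P := by
      rw [← Real.logb_div (ne_of_gt h1) (ne_of_gt hP)]
      congr 1
      field_simp
    rw [this, Cfun]
    ring
  -- Term 2
  have T2 : Tendsto (fun P : ℝ => Cfun (h22 ^ 2 * P / (1 + m * P))) atTop
      (nhds (Cfun (h22 ^ 2 / m))) := by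
    have harg : Tendsto (fun P : ℝ => h22 ^ 2 / (1 / P + m)) atTop
        (nhds (h22 ^ 2 / m)) := by
      have h0 : Tendsto (fun P : ℝ => 1 / P + m) atTop (nhds m) := by
        have := tendsto_inv_atTop_zero (𝕜 := ℝ)
        simpa [one_div] using this.add_const m
      exact (tendsto_const_nhds.div h0 (ne_of_gt hmpos))
    have harg' : Tendsto (fun P : ℝ => h22 ^ 2 * P / (1 + m * P)) atTop
        (nhds (h22 ^ 2 / m)) := by
      refine harg.congr' ?_
      filter_upwards [eventually_gt_atTop (0 : ℝ)] with P hP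
      have h1 : (0 : ℝ) < 1 + m * P := by positivity
      field_simp
    have hCcont : ContinuousAt Cfun (h22 ^ 2 / m) := by
      have hpos : (0 : ℝ) < 1 + h22 ^ 2 / m := by positivity
      exact (continuousAt_const.mul
        ((Real.continuousAt_logb (ne_of_gt hpos)).comp (continuousAt_const.add continuousAt_id)))
    exact hCcont.tendsto.comp harg'
  have Tmain : Tendsto (fun P : ℝ => RbarS1 h11 h21 hr1 h22 h2r P - (1 / 2) * Real.logb 2 P)
      atTop (nhds ((1 / 2) * Real.logb 2 A + Cfun (h22 ^ 2 / m) + Cfun (h2r ^ 2 / h21 ^ 2))) := by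
    have := (T1.add T2).add (tendsto_const_nhds (x := Cfun (h2r ^ 2 / h21 ^ 2)) (f := atTop))
    refine this.congr fun P => ?_
    simp only [RbarS1]
    ring
  exact ⟨Tmain, Tmain.isBigO_one ℝ⟩
end

section
/- Let c ∈ ℝ, and let U and V be independent real random variables on a probability space, each with law gaussianReal 0 1 (the standard Gaussian measure on ℝ). Define W := V − c·U. Then for (law of W)-almost every w ∈ ℝ, the conditional distribution of U given W = w (in the sense of Mathlib's condDistrib / regular conditional probability) is the Gaussian measure on ℝ with mean −c·w/(1 + c²) and variance 1/(1 + c²). -/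
open MeasureTheory ProbabilityTheory Real
open scoped ENNReal NNReal

lemma pdf_id (c u w : ℝ) :
    gaussianPDFReal 0 1 u * gaussianPDFReal (-(c*u)) 1 w
      = gaussianPDFReal 0 ((1+c^2:ℝ)).toNNReal w *
        gaussianPDFReal (-c*w/(1+c^2)) ((1/(1+c^2):ℝ)).toNNReal u := by
  have hs : (0:ℝ) < 1 + c^2 := by positivity
  simp only [gaussianPDFReal]
  rw [Real.coe_toNNReal _ hs.le, Real.coe_toNNReal _ (by positivity : (0:ℝ) ≤ 1/(1+c^2))]
  push_cast
  rw [mul_mul_mul_comm, mul_mul_mul_comm ((√(2 * π * (1+c^2)))⁻¹)]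
  rw [← Real.exp_add, ← Real.exp_add]
  congr 1
  · rw [← mul_inv, ← mul_inv, ← Real.sqrt_mul (by positivity), ← Real.sqrt_mul (by positivity)]
    congr 2
    field_simp
  · congr 1
    field_simp
    ring

lemma meas_unc (c : ℝ) : Measurable (Function.uncurry
    (fun w u => gaussianPDF (-c*w/(1+c^2)) ((1/(1+c^2):ℝ)).toNNReal u)) := by
  unfold gaussianPDF gaussianPDFReal
  fun_prop

noncomputable def condKer (c : ℝ) : Kernel ℝ ℝ :=
  Kernel.withDensity (Kernel.const ℝ volume)
    (fun w u => gaussianPDF (-c*w/(1+c^2)) ((1/(1+c^2):ℝ)).toNNReal u)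

lemma vK_ne (c : ℝ) : ((1/(1+c^2):ℝ)).toNNReal ≠ 0 := by
  have h : (0:ℝ) < 1/(1+c^2) := by positivity
  exact (Real.toNNReal_pos.mpr h).ne'

lemma condKer_apply (c w : ℝ) :
    condKer c w = gaussianReal (-c*w/(1+c^2)) ((1/(1+c^2):ℝ)).toNNReal := by
  rw [condKer, Kernel.withDensity_apply _ (meas_unc c), Kernel.const_apply,
    ← gaussianReal_of_var_ne_zero _ (vK_ne c)]

instance (c : ℝ) : IsMarkovKernel (condKer c) :=
  ⟨fun w => by rw [condKer_apply]; infer_instance⟩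

lemma vW_ne (c : ℝ) : ((1+c^2:ℝ)).toNNReal ≠ 0 := by
  have h : (0:ℝ) < 1+c^2 := by positivity
  exact (Real.toNNReal_pos.mpr h).ne'

lemma pdf_id' (c u w : ℝ) :
    gaussianPDF 0 1 u * gaussianPDF (-(c*u)) 1 w
      = gaussianPDF 0 ((1+c^2:ℝ)).toNNReal w *
        gaussianPDF (-c*w/(1+c^2)) ((1/(1+c^2):ℝ)).toNNReal u := by
  rw [gaussianPDF, gaussianPDF, gaussianPDF, gaussianPDF,
    ← ENNReal.ofReal_mul (gaussianPDFReal_nonneg _ _ _),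
    ← ENNReal.ofReal_mul (gaussianPDFReal_nonneg _ _ _), pdf_id]

lemma key (c : ℝ) :
    ((gaussianReal 0 1).prod (gaussianReal 0 1)).map (fun p : ℝ × ℝ => (p.2 - c * p.1, p.1))
      = (gaussianReal 0 ((1+c^2:ℝ)).toNNReal) ⊗ₘ condKer c := by
  have hg : Measurable (fun p : ℝ × ℝ => (p.2 - c * p.1, p.1)) := by fun_prop
  ext s hs
  have hF : Measurable (s.indicator (1 : ℝ × ℝ → ℝ≥0∞)) := measurable_one.indicator hs
  set F := s.indicator (1 : ℝ × ℝ → ℝ≥0∞) with hFdef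
  have hFcomp : Measurable (fun a : ℝ × ℝ => F (a.2 - c * a.1, a.1)) := hF.comp hg
  have hFu : ∀ u : ℝ, Measurable (fun w : ℝ => F (w, u)) :=
    fun u => hF.comp (measurable_id.prodMk measurable_const)
  have hFw : ∀ w : ℝ, Measurable (fun u : ℝ => F (w, u)) :=
    fun w => hF.comp (measurable_const.prodMk measurable_id)
  have hpdfL : Measurable (Function.uncurry
      (fun u w : ℝ => gaussianPDF 0 1 u * (gaussianPDF (-(c*u)) 1 w * F (w, u)))) := by
    refine Measurable.mul ?_ (Measurable.mul ?_ (hF.comp (by fun_prop)))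
    · unfold gaussianPDF gaussianPDFReal; fun_prop
    · unfold gaussianPDF gaussianPDFReal; fun_prop
  rw [← lintegral_indicator_one hs, ← lintegral_indicator_one hs,
    lintegral_map hF hg, Measure.lintegral_compProd hF,
    MeasureTheory.lintegral_prod (fun a : ℝ × ℝ => F (a.2 - c * a.1, a.1)) hFcomp.aemeasurable]
  have inner : ∀ u : ℝ, (∫⁻ v, F (v - c * u, u) ∂(gaussianReal 0 1))
      = ∫⁻ w, gaussianPDF (-(c*u)) 1 w * F (w, u) ∂volume := by
    intro u
    have h1 : (∫⁻ w, F (w, u) ∂((gaussianReal 0 1).map (· + -(c*u))))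
        = ∫⁻ v, F (v - c * u, u) ∂(gaussianReal 0 1) := by
      rw [lintegral_map (hFu u) (measurable_add_const _)]
      simp_rw [sub_eq_add_neg]
    rw [← h1, gaussianReal_map_add_const, zero_add, gaussianReal_of_var_ne_zero _ one_ne_zero,
      lintegral_withDensity_eq_lintegral_mul _ (measurable_gaussianPDF _ _) (hFu u)]
    simp only [Pi.mul_apply]
  simp_rw [inner]
  have hGmeas : Measurable (fun u : ℝ =>
      ∫⁻ w, gaussianPDF (-(c*u)) 1 w * F (w, u) ∂volume) := by
    apply Measurable.lintegral_prod_right (f := fun u w => gaussianPDF (-(c*u)) 1 w * F (w, u))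
    refine Measurable.mul ?_ (hF.comp (by fun_prop))
    unfold gaussianPDF gaussianPDFReal; fun_prop
  rw [gaussianReal_of_var_ne_zero (0:ℝ) one_ne_zero,
    lintegral_withDensity_eq_lintegral_mul _ (measurable_gaussianPDF _ _) hGmeas]
  simp only [Pi.mul_apply]
  have hpull : ∀ u : ℝ, gaussianPDF 0 1 u *
        (∫⁻ w, gaussianPDF (-(c*u)) 1 w * F (w, u) ∂volume)
      = ∫⁻ w, gaussianPDF 0 1 u * (gaussianPDF (-(c*u)) 1 w * F (w, u)) ∂volume := by
    intro u
    rw [← lintegral_const_mul]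
    refine Measurable.mul ?_ (hFu u)
    unfold gaussianPDF gaussianPDFReal; fun_prop
  simp_rw [hpull]
  rw [lintegral_lintegral_swap hpdfL.aemeasurable]
  -- RHS side
  have hR : ∀ w : ℝ, (∫⁻ y, F (w, y) ∂(condKer c w))
      = ∫⁻ u, gaussianPDF (-c*w/(1+c^2)) ((1/(1+c^2):ℝ)).toNNReal u * F (w, u) ∂volume := by
    intro w
    rw [condKer_apply, gaussianReal_of_var_ne_zero _ (vK_ne c),
      lintegral_withDensity_eq_lintegral_mul _ (measurable_gaussianPDF _ _) (hFw w)]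
    simp only [Pi.mul_apply]
  simp_rw [hR]
  have hmeasR : Measurable (fun w : ℝ =>
      ∫⁻ u, gaussianPDF (-c*w/(1+c^2)) ((1/(1+c^2):ℝ)).toNNReal u * F (w, u) ∂volume) := by
    apply Measurable.lintegral_prod_right
      (f := fun w u => gaussianPDF (-c*w/(1+c^2)) ((1/(1+c^2):ℝ)).toNNReal u * F (w, u))
    exact (meas_unc c).mul (hF.comp (by fun_prop))
  rw [gaussianReal_of_var_ne_zero (0:ℝ) (vW_ne c),
    lintegral_withDensity_eq_lintegral_mul _ (measurable_gaussianPDF _ _) hmeasR]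
  simp only [Pi.mul_apply]
  refine lintegral_congr fun w => ?_
  rw [← lintegral_const_mul]
  swap
  · refine Measurable.mul ?_ (hFw w)
    unfold gaussianPDF gaussianPDFReal; fun_prop
  refine lintegral_congr fun u => ?_
  rw [← mul_assoc, ← mul_assoc, pdf_id']

/-- Gaussian conditioning: if `U, V` are independent standard Gaussians and `W = V - c·U`,
then for (law of `W`)-almost every `w`, the regular conditional distribution of `U` given
`W = w` is Gaussian with mean `-c·w/(1 + c²)` and variance `1/(1 + c²)`. -/
theorem stmt2 {Ωs : Type*} [MeasurableSpace Ωs] (μ : Measure Ωs) [IsProbabilityMeasure μ]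
    (c : ℝ) (U V : Ωs → ℝ) (hU : Measurable U) (hV : Measurable V)
    (hindep : IndepFun U V μ)
    (hUlaw : μ.map U = gaussianReal 0 1) (hVlaw : μ.map V = gaussianReal 0 1) :
    ∀ᵐ w ∂(μ.map (fun ω => V ω - c * U ω)),
      condDistrib U (fun ω => V ω - c * U ω) μ w
        = gaussianReal (-c * w / (1 + c ^ 2)) ((1 / (1 + c ^ 2) : ℝ).toNNReal) := by
  have hg : Measurable (fun p : ℝ × ℝ => (p.2 - c * p.1, p.1)) := by fun_prop
  have hW : Measurable (fun ω => V ω - c * U ω) := hV.sub (hU.const_mul c)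
  have hUV := (indepFun_iff_map_prod_eq_prod_map_map hU.aemeasurable hV.aemeasurable).mp hindep
  rw [hUlaw, hVlaw] at hUV
  have hjoint : μ.map (fun ω => (V ω - c * U ω, U ω))
      = ((gaussianReal 0 1).prod (gaussianReal 0 1)).map
          (fun p : ℝ × ℝ => (p.2 - c * p.1, p.1)) := by
    rw [← hUV, Measure.map_map hg (hU.prodMk hV)]
    rfl
  have hjoint2 := hjoint.trans (key c)
  have hWlaw : μ.map (fun ω => V ω - c * U ω) = gaussianReal 0 ((1+c^2:ℝ)).toNNReal := by
    rw [← Measure.fst_map_prodMk₀ hU.aemeasurable, hjoint2, Measure.fst_compProd]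
  have h := condDistrib_ae_eq_of_measure_eq_compProd_of_measurable hW hU (κ := condKer c)
    (by rw [hjoint2, hWlaw])
  filter_upwards [h] with w hw
  rw [hw, condKer_apply]
end
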